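/- Let K and L be categories such that PK and PL are complete. If F : K → L has a left adjoint, then PF : PK → PL is continuous (preserves all small limits). -/

import Mathlib

open CategoryTheory CategoryTheory.Limits Opposite

universe w v v' u u'

/-- A functor `S : K ⥤ M` is (`w`-)small if it is the left Kan extension of its
restriction to some small full subcategory of `K`. -/
def IsSmallFunctor {K : Type u} [Category.{v} K] {M : Type u'} [Category.{v'} M]
    (S : K ⥤ M) : Prop :=
  ∃ P : K → Prop, Small.{w} (Subtype P) ∧
    S.IsLeftKanExtension (𝟙 (ObjectProperty.ι P ⋙ S))

/-- Representable presheaves are small. -/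
theorem isSmallFunctor_yoneda_obj {K : Type u} [Category.{v} K] (A : K) :
    IsSmallFunctor.{w} (yoneda.obj A) := by
  refine ⟨fun X => X = op A, ?_, ?_⟩
  · have : Subsingleton {X : Kᵒᵖ // X = op A} :=
      ⟨fun X Y => Subtype.ext (X.2.trans Y.2.symm)⟩
    infer_instance
  · set P : Kᵒᵖ → Prop := fun X => X = op A with hP
    set ι := ObjectProperty.ι P with hι
    constructor
    refine ⟨IsInitial.ofUniqueHom (fun E => StructuredArrow.homMk
      (yonedaEquiv.symm (E.hom.app ⟨op A, rfl⟩ (𝟙 A))) ?_) ?_⟩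
    · ext X f
      have hnat := types_congr_hom (E.hom.naturality
        (show (⟨op A, rfl⟩ : ObjectProperty.FullSubcategory P) ⟶ X from
          ObjectProperty.homMk f.op)) (𝟙 A)
      have e1 : E.hom.app X ((f : X.obj.unop ⟶ A) ≫ 𝟙 A) =
          E.right.map (f : X.obj.unop ⟶ A).op (E.hom.app ⟨op A, rfl⟩ (𝟙 A)) := hnat
      rw [Category.comp_id] at e1
      exact e1.symm
    · intro E m
      apply StructuredArrow.hom_ext
      ext Y g
      have hx := types_congr_hom (NatTrans.congr_app m.w ⟨op A, rfl⟩) (𝟙 A)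
      have hnat := types_congr_hom (m.right.naturality (Quiver.Hom.op g : op A ⟶ Y)) (𝟙 A)
      have e2 : m.right.app (op A) (𝟙 A) = E.hom.app ⟨op A, rfl⟩ (𝟙 A) := hx
      have e1 : m.right.app Y ((g : Y.unop ⟶ A) ≫ 𝟙 A) =
          E.right.map (g : Y.unop ⟶ A).op (m.right.app (op A) (𝟙 A)) := hnat
      have e3 : m.right.app Y ((g : Y.unop ⟶ A) ≫ 𝟙 A) = m.right.app Y g :=
        congrArg (m.right.app Y) (Category.comp_id (g : Y.unop ⟶ A))
      exact e3.symm.trans (e1.trans (congrArg (E.right.map (g : Y.unop ⟶ A).op) e2))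

/-- The category of small presheaves on `K`. -/
abbrev SmallPresheaf (K : Type u) [Category.{v} K] : Type (max u (v + 1)) :=
  ObjectProperty.FullSubcategory (fun F : Kᵒᵖ ⥤ Type v => IsSmallFunctor.{v} F)

/-- The Yoneda embedding of `K` into its category of small presheaves. -/
def smallYoneda (K : Type u) [Category.{v} K] : K ⥤ SmallPresheaf K where
  obj A := ⟨yoneda.obj A, isSmallFunctor_yoneda_obj A⟩
  map f := ObjectProperty.homMk (yoneda.map f)

/-- `L` is a limit of `S : C ⥤ A` weighted by `φ : C ⥤ Type v`, i.e. morphisms `a ⟶ L`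
correspond, naturally in `a`, to natural transformations `φ ⟶ A(a, S-)`. -/
def IsWeightedLimit {C : Type u} [Category.{v} C] {A : Type u'} [Category.{v'} A]
    (φ : C ⥤ Type v) (S : C ⥤ A) (L : A) : Prop :=
  ∃ e : ∀ a : A, (a ⟶ L) ≃
      ((φ ⋙ uliftFunctor.{v'}) ⟶ (S ⋙ coyoneda.obj (op a) ⋙ uliftFunctor.{v})),
    ∀ (a a' : A) (f : a' ⟶ a) (g : a ⟶ L) (c : C) (x : φ.obj c),
      (e a' (f ≫ g)).app c ⟨x⟩ = ⟨f ≫ ((e a g).app c ⟨x⟩).down⟩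

/-- `L` is a colimit of `T : Cᵒᵖ ⥤ A` weighted by `φ : C ⥤ Type v`, i.e. morphisms `L ⟶ a`
correspond, naturally in `a`, to natural transformations `φ ⟶ A(T-, a)`. -/
def IsWeightedColimit {C : Type u} [Category.{v} C] {A : Type u'} [Category.{v'} A]
    (φ : C ⥤ Type v) (T : Cᵒᵖ ⥤ A) (L : A) : Prop :=
  ∃ e : ∀ a : A, (L ⟶ a) ≃
      ((φ ⋙ uliftFunctor.{v'}) ⟶ (T.rightOp ⋙ yoneda.obj a ⋙ uliftFunctor.{v})),
    ∀ (a a' : A) (f : a ⟶ a') (g : L ⟶ a) (c : C) (x : φ.obj c),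
      (e a' (g ≫ f)).app c ⟨x⟩ = ⟨((e a g).app c ⟨x⟩).down ≫ f⟩

/-- A class of weights with small domains. -/
def WeightClass : Type (v + 1) :=
  ∀ C : Cat.{v, v}, (C ⥤ Type v) → Prop

/-- A category is `Φ`-complete if it has all `φ`-weighted limits for `φ ∈ Φ`. -/
def PhiComplete (Φ : WeightClass.{v}) (A : Type u) [Category.{v'} A] : Prop :=
  ∀ (C : Cat.{v, v}) (φ : C ⥤ Type v), Φ C φ →
    ∀ S : C ⥤ A, ∃ L : A, IsWeightedLimit φ S L

/-- A category is `Φ`-cocomplete if it has all `φ`-weighted colimits for `φ ∈ Φ`. -/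
def PhiCocomplete (Φ : WeightClass.{v}) (A : Type u) [Category.{v'} A] : Prop :=
  ∀ (C : Cat.{v, v}) (φ : C ⥤ Type v), Φ C φ →
    ∀ T : Cᵒᵖ ⥤ A, ∃ L : A, IsWeightedColimit φ T L

/-- A functor is `Φ`-continuous if it preserves all `φ`-weighted limits for `φ ∈ Φ`. -/
def PhiContinuous (Φ : WeightClass.{v}) {A : Type u} [Category.{v'} A]
    {B : Type u'} [Category.{w} B] (F : A ⥤ B) : Prop :=
  ∀ (C : Cat.{v, v}) (φ : C ⥤ Type v), Φ C φ →
    ∀ (S : C ⥤ A) (L : A), IsWeightedLimit φ S L → IsWeightedLimit φ (S ⋙ F) (F.obj L)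

/-- The closure of a collection `P` of objects of `A` under `Φ`-weighted colimits. -/
inductive PhiClosure (Φ : WeightClass.{v}) {A : Type u} [Category.{v'} A]
    (P : A → Prop) : A → Prop
  | base {X : A} (hX : P X) : PhiClosure Φ P X
  | colim {C : Cat.{v, v}} (φ : C ⥤ Type v) (hφ : Φ C φ) (T : Cᵒᵖ ⥤ A)
      (hT : ∀ c : Cᵒᵖ, PhiClosure Φ P (T.obj c)) {L : A}
      (hL : IsWeightedColimit φ T L) : PhiClosure Φ P L

/-- The smallness condition on a class of weights: for every small `C`, the closure of the
representables in the presheaf category of `C` under `Φ`-weighted colimits is small. -/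
def SmallnessCondition (Φ : WeightClass.{v}) : Prop :=
  ∀ C : Cat.{v, v}, EssentiallySmall.{v} (ObjectProperty.FullSubcategory (PhiClosure Φ
    (fun F : Cᵒᵖ ⥤ Type v => ∃ c : C, Nonempty (F ≅ yoneda.obj c))))

/-- The soundness condition on a class of weights: for every small `Φ`-complete `D` and every
`Φ`-continuous `ψ : D ⥤ Type v`, the weighted-colimit functor `ψ * (-) : [Dᵒᵖ, Type v] ⥤ Type v`
(i.e. the small-colimit-preserving extension of `ψ` along the Yoneda embedding) is
`Φ`-continuous. -/
def SoundnessCondition (Φ : WeightClass.{v}) : Prop :=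
  ∀ D : Cat.{v, v}, PhiComplete Φ D → ∀ ψ : D ⥤ Type v, PhiContinuous Φ ψ →
    ∀ T : (Dᵒᵖ ⥤ Type v) ⥤ Type v, PreservesColimitsOfSize.{v, v} T →
      Nonempty ((yoneda : D ⥤ _) ⋙ T ≅ ψ) → PhiContinuous Φ T

/-- `φ` belongs to the saturation of `Φ` if it lies in the closure of the representables
under `Φ`-weighted colimits in the presheaf category over its domain. -/
def InSaturation (Φ : WeightClass.{v}) (C : Cat.{v, v}) (φ : C ⥤ Type v) : Prop :=
  PhiClosure Φ (fun F : C ⥤ Type v => ∃ c : Cᵒᵖ, Nonempty (F ≅ coyoneda.obj c)) φ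

/-- A category `J` is `α`-filtered when every diagram with fewer than `α` arrows
admits a cocone. -/
def IsCardinalFiltered (J : Type u) [Category.{v'} J] (α : Cardinal.{v}) : Prop :=
  ∀ D : Cat.{v, v}, Cardinal.mk (Arrow D) < α → ∀ F : D ⥤ J, Nonempty (Cocone F)

/-- An object `X` is `α`-presentable when its hom-functor preserves `α`-filtered colimits. -/
def IsPresentableObj {K : Type u} [Category.{v} K] (α : Cardinal.{v}) (X : K) : Prop :=
  ∀ J : Cat.{v, v}, IsCardinalFiltered J α →
    PreservesColimitsOfShape J (coyoneda.obj (op X))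

/-- `K` is locally `α`-presentable: it is cocomplete and has a small full subcategory of
`α`-presentable objects such that every object is an `α`-filtered colimit of objects
from it. -/
def IsLocallyPresentableAt (K : Type u) [Category.{v} K] (α : Cardinal.{v}) : Prop :=
  HasColimitsOfSize.{v, v} K ∧ α.IsRegular ∧
    ∃ P : K → Prop, Small.{v} (Subtype P) ∧ (∀ X, P X → IsPresentableObj α X) ∧
      ∀ X : K, ∃ J : Cat.{v, v}, IsCardinalFiltered J α ∧
        ∃ (F : J ⥤ K) (c : Cocone F),
          (∀ j, P (F.obj j)) ∧ c.pt = X ∧ Nonempty (IsColimit c)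

/-- `K` is locally presentable. -/
def IsLocallyPresentable (K : Type u) [Category.{v} K] : Prop :=
  ∃ α : Cardinal.{v}, IsLocallyPresentableAt K α

/-- `PF : PK ⥤ PL` is the (essentially unique) functor sending a small presheaf `X` to the
left Kan extension of `X` along `Fᵒᵖ`. -/
def IsPshExtensionOf {K : Type u} {L : Type u'} [Category.{v} K] [Category.{v} L]
    (F : K ⥤ L) (PF : SmallPresheaf K ⥤ SmallPresheaf L) : Prop :=
  ∃ ε : ObjectProperty.ι (fun X : Kᵒᵖ ⥤ Type v => IsSmallFunctor.{v} X) ⟶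
      PF ⋙ ObjectProperty.ι (fun X : Lᵒᵖ ⥤ Type v => IsSmallFunctor.{v} X) ⋙
        (Functor.whiskeringLeft Kᵒᵖ Lᵒᵖ (Type v)).obj F.op,
    ∀ X : SmallPresheaf K, Functor.IsLeftKanExtension ((PF.obj X).obj) (ε.app X)

open MonoidalCategory in
/-- `D` is the Day convolution `∫^{A,B} K(-, A ⊗ B) × F A × G B` of the presheaves
`F` and `G`: it carries a universal wedge. -/
def IsDayConvolution {K : Type u} [Category.{v} K] [MonoidalCategory K]
    (F G D : Kᵒᵖ ⥤ Type v) : Prop :=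
  ∃ u : ∀ A B : K, F.obj (op A) → G.obj (op B) → D.obj (op (A ⊗ B)),
    (∀ (A A' B B' : K) (f : A' ⟶ A) (g : B' ⟶ B) (x : F.obj (op A)) (y : G.obj (op B)),
      u A' B' (F.map f.op x) (G.map g.op y)
        = D.map (MonoidalCategory.tensorHom f g).op (u A B x y)) ∧
    ∀ (H : Kᵒᵖ ⥤ Type v)
      (p : ∀ A B : K, F.obj (op A) → G.obj (op B) → H.obj (op (A ⊗ B))),
      (∀ (A A' B B' : K) (f : A' ⟶ A) (g : B' ⟶ B) (x : F.obj (op A)) (y : G.obj (op B)),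
        p A' B' (F.map f.op x) (G.map g.op y)
          = H.map (MonoidalCategory.tensorHom f g).op (p A B x y)) →
      ∃! τ : D ⟶ H, ∀ (A B : K) (x : F.obj (op A)) (y : G.obj (op B)),
        τ.app (op (A ⊗ B)) (u A B x y) = p A B x y

/-- The restricted Yoneda embedding of `M` into presheaves on the full subcategory of
`β`-presentable objects. -/
def restrictedYoneda (M : Type u) [Category.{v} M] (β : Cardinal.{v}) :
    M ⥤ ((ObjectProperty.FullSubcategory (IsPresentableObj β : M → Prop))ᵒᵖ ⥤ Type v) :=
  yoneda ⋙ (Functor.whiskeringLeft _ _ _).obj (ObjectProperty.ι _).op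

/-! If `G ⊣ F`, then precomposition with `Gᵒᵖ` is a left Kan extension along `Fᵒᵖ`
(the unit of the whiskered adjunction is a universal arrow), so `PF X ≅ Gᵒᵖ ⋙ X`
naturally in `X`. Evaluation of small presheaves at `op k` is corepresented, up to `ULift`,
by the small presheaf `yoneda.obj k`, hence continuous. So `PF` followed by the inclusion
into all presheaves is continuous pointwise, and the fully faithful inclusion reflects
limits. -/

namespace CategoryTheory

universe v₁ v₂ v₃ v₄ u₁ u₂ u₃ u₄

section

variable {A : Type u₁} {B : Type u₂} {C : Type u₃}
  [Category.{v₁} A] [Category.{v₂} B] [Category.{v₃} C]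

lemma Adjunction.isLeftKanExtension_whiskerLeft_unit_app {F : A ⥤ B} {G : B ⥤ A} (adj : F ⊣ G)
    (H : A ⥤ C) :
    (G ⋙ H).IsLeftKanExtension ((adj.whiskerLeft C).unit.app H : H ⟶ F ⋙ G ⋙ H) :=
  ⟨⟨mkInitialOfLeftAdjoint _ (adj.whiskerLeft C) H⟩⟩

variable {𝒳 : Type u₄} [Category.{v₄} 𝒳] {L : A ⥤ B} {Ψ : 𝒳 ⥤ A ⥤ C} {Φ₁ Φ₂ : 𝒳 ⥤ B ⥤ C}

noncomputable def Functor.natIsoOfIsLeftKanExtensionApp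
    (ε₁ : Ψ ⟶ Φ₁ ⋙ (Functor.whiskeringLeft A B C).obj L)
    (ε₂ : Ψ ⟶ Φ₂ ⋙ (Functor.whiskeringLeft A B C).obj L)
    (h₁ : ∀ X, (Φ₁.obj X).IsLeftKanExtension (ε₁.app X))
    (h₂ : ∀ X, (Φ₂.obj X).IsLeftKanExtension (ε₂.app X)) : Φ₁ ≅ Φ₂ :=
  have := h₁
  have := h₂
  NatIso.ofComponents (fun X => Functor.leftKanExtensionUnique _ (ε₁.app X) _ (ε₂.app X))
    (fun {X Y} f => (Φ₁.obj X).hom_ext_of_isLeftKanExtension (ε₁.app X) _ _ (by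
      have nat₁ : Ψ.map f ≫ ε₁.app Y = ε₁.app X ≫ L.whiskerLeft (Φ₁.map f) := ε₁.naturality f
      have nat₂ : Ψ.map f ≫ ε₂.app Y = ε₂.app X ≫ L.whiskerLeft (Φ₂.map f) := ε₂.naturality f
      simp only [leftKanExtensionUnique_hom, Functor.whiskerLeft_comp, ← reassoc_of% nat₁,
        descOfIsLeftKanExtension_fac, descOfIsLeftKanExtension_fac_assoc, nat₂]))

end

lemma ObjectProperty.preservesLimitsOfSize_ι_comp_evaluation {K : Type u₁} [Category.{v₁} K]
    (P : ObjectProperty (Kᵒᵖ ⥤ Type v₁)) {k : Kᵒᵖ} (hk : P (yoneda.obj k.unop)) :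
    PreservesLimitsOfSize.{v₂, u₂} (P.ι ⋙ (evaluation Kᵒᵖ (Type v₁)).obj k) := by
  let Y : P.FullSubcategory := ⟨yoneda.obj k.unop, hk⟩
  let e : coyoneda.obj (op Y) ≅ (P.ι ⋙ (evaluation Kᵒᵖ (Type v₁)).obj k) ⋙ uliftFunctor.{u₁} :=
    NatIso.ofComponents (fun X => P.fullyFaithfulι.homEquiv.toIso) (by intros; ext; rfl) ≪≫
      Functor.isoWhiskerLeft P.ι (largeCurriedYonedaLemma.app k)
  have := preservesLimits_of_natIso e
  exact preservesLimits_of_reflects_of_preserves _ uliftFunctor.{u₁}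

end CategoryTheory

lemma IsPshExtensionOf.nonempty_iso_of_adjunction {K : Type u} {L : Type u'}
    [Category.{v} K] [Category.{v} L] {F : K ⥤ L} {G : L ⥤ K} (adj : G ⊣ F)
    {PF : SmallPresheaf K ⥤ SmallPresheaf L} (hPF : IsPshExtensionOf F PF) :
    Nonempty (PF ⋙ ObjectProperty.ι _ ≅
      ObjectProperty.ι _ ⋙ (Functor.whiskeringLeft Lᵒᵖ Kᵒᵖ (Type v)).obj G.op) := by
  obtain ⟨ε, hε⟩ := hPF
  exact ⟨Functor.natIsoOfIsLeftKanExtensionApp ε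
    (Functor.whiskerLeft (ObjectProperty.ι _) (adj.op.whiskerLeft (Type v)).unit) hε
    (fun X => adj.op.isLeftKanExtension_whiskerLeft_unit_app X.obj)⟩

theorem statement13_general {K : Type u} {L : Type u'} [Category.{v} K] [Category.{v} L]
    (F : K ⥤ L) (hF : F.IsRightAdjoint)
    (PF : SmallPresheaf K ⥤ SmallPresheaf L) (hPF : IsPshExtensionOf F PF) :
    PreservesLimitsOfSize.{v, v} PF := by
  obtain ⟨G, ⟨adj⟩⟩ := hF.exists_leftAdjoint
  obtain ⟨e⟩ := hPF.nonempty_iso_of_adjunction adj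
  have hpres : ∀ l : Lᵒᵖ, PreservesLimitsOfSize.{v, v} ((ObjectProperty.ι _ ⋙
      (Functor.whiskeringLeft Lᵒᵖ Kᵒᵖ (Type v)).obj G.op) ⋙ (evaluation Lᵒᵖ (Type v)).obj l) :=
    fun l => ObjectProperty.preservesLimitsOfSize_ι_comp_evaluation
      (fun X : Kᵒᵖ ⥤ Type v => IsSmallFunctor.{v} X) (isSmallFunctor_yoneda_obj (G.obj l.unop))
  have : PreservesLimitsOfSize.{v, v} (PF ⋙ ObjectProperty.ι _) :=
    preservesLimits_of_evaluation _ fun l =>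
      preservesLimits_of_natIso (Functor.isoWhiskerRight e.symm ((evaluation Lᵒᵖ (Type v)).obj l))
  exact preservesLimits_of_reflects_of_preserves PF (ObjectProperty.ι _)

/-- If `PK` and `PL` are complete and `F : K ⥤ L` has a left adjoint, then
`PF : PK ⥤ PL` preserves all small limits. -/
theorem statement13 {K : Type u} {L : Type u'} [Category.{v} K] [Category.{v} L]
    [HasLimitsOfSize.{v, v} (SmallPresheaf K)]
    [HasLimitsOfSize.{v, v} (SmallPresheaf L)]
    (F : K ⥤ L) (hF : F.IsRightAdjoint)
    (PF : SmallPresheaf K ⥤ SmallPresheaf L) (hPF : IsPshExtensionOf F PF) :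
    PreservesLimitsOfSize.{v, v} PF :=
  statement13_general F hF PF hPF
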